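/- arXiv:2202.05018 — 4 statements merged into one kernel-verified Lean document; each statement's English description precedes it below -/
import Mathlib

section
/- Let ε>0 and η_ε>0 with η_ε/ε ∈ ℕ, let Ω ⊆ U be open subsets of ℝ³, let i ∈ Z_ε(U), and let η ∈ [η_ε, +∞) be such that Q_{η+4ε}(i) ⊆ U. If E ⊆ Z_ε(Ω) is locally flat in Q_η(i) (with respect to U), then E is a simple coordinate laminate in Q_η(i). -/
open Set Filter MeasureTheory Metric
open scoped BigOperators ENNReal Topology

noncomputable section

attribute [local instance] Classical.propDecidable

/-- Three-dimensional Euclidean space. -/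
abbrev E3 := EuclideanSpace ℝ (Fin 3)

/-- `x` is a point of the lattice `εℤ³`. -/
def lat (ε : ℝ) (x : E3) : Prop := ∀ k, ∃ n : ℤ, x k = ε * n

/-- `Z_ε(A) := εℤ³ ∩ A`. -/
def Zset (ε : ℝ) (A : Set E3) : Set E3 := {x | lat ε x ∧ x ∈ A}

/-- The half-open cube `Q_ρ(x) = x + ρ[-1/2,1/2)³`. -/
def cube (ρ : ℝ) (x : E3) : Set E3 := {y | ∀ k, x k - ρ / 2 ≤ y k ∧ y k < x k + ρ / 2}

/-- `k̂ := k + ε(1/2,1/2,1/2)`. -/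
def hat (ε : ℝ) (k : E3) : E3 := WithLp.toLp 2 (fun j => k j + ε / 2)

/-- The "half-cube" pattern: the lattice points of `Q_{2ε}(k̂)` whose `m`-th coordinate
equals `v`.  For `v ∈ {k m, k m + ε}` these are exactly the images of the reference
pattern `{k, k+εe₁, k+εe₂, k+ε(e₁+e₂)}` under rotations by multiples of `π/2`
about axes through `k̂` parallel to coordinate vectors. -/
def halfPattern (ε : ℝ) (k : E3) (m : Fin 3) (v : ℝ) : Set E3 :=
  {p | lat ε p ∧ p ∈ cube (2 * ε) (hat ε k) ∧ p m = v}

/-- `E` is locally flat in `Q_η(x)` (with respect to `U`). -/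
def LocallyFlat (ε η : ℝ) (U E : Set E3) (x : E3) : Prop :=
  ∀ k : E3, lat ε k → (cube η x ∩ cube (2 * ε) (hat ε k)).Nonempty →
    E ∩ cube (2 * ε) (hat ε k) = Zset ε (cube (2 * ε) (hat ε k)) ∩ U ∨
    E ∩ cube (2 * ε) (hat ε k) = ∅ ∨
    ∃ m : Fin 3, ∃ v : ℝ, (v = k m ∨ v = k m + ε) ∧
      E ∩ cube (2 * ε) (hat ε k) = halfPattern ε k m v ∩ U

/-- `E` is cubic in `Q_η(x)` (with respect to `U`), at the mesoscale `ηm`. -/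
def CubicSet (ε ηm η : ℝ) (U E : Set E3) (x : E3) : Prop :=
  ∃ i0 ∈ Zset ε (cube ηm (0 : E3)), ∃ K : Finset E3,
    (∀ k ∈ K, ∃ z : Fin 3 → ℤ, ∀ j, k j = i0 j + ηm * (z j : ℝ)) ∧
    E ∩ cube η x = Zset ε (⋃ k ∈ K, cube ηm k) ∩ cube η x ∩ U

/-- `E` is flat in `Q_{ηm}(x)` (with respect to `U`): cubic and locally flat. -/
def FlatSet (ε ηm : ℝ) (U E : Set E3) (x : E3) : Prop :=
  CubicSet ε ηm ηm U E x ∧ LocallyFlat ε ηm U E x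

/-- `E` is a simple coordinate laminate in `A` with normal `e_m` (with respect to `U`):
there is `h : ℝ → {0,1}` with `χ_{Z_ε(A) ∩ E}(i) = h(i·e_m)·χ_{Z_ε(A)}(i)` for all
`i ∈ Z_ε(U)`. -/
def LaminateWith (ε : ℝ) (U A E : Set E3) (m : Fin 3) : Prop :=
  ∃ h : ℝ → Prop, ∀ i ∈ Zset ε U, (i ∈ Zset ε A ∩ E ↔ h (i m) ∧ i ∈ Zset ε A)

/-- `E` is a simple coordinate laminate in `A` (with respect to `U`). -/
def Laminate (ε : ℝ) (U A E : Set E3) : Prop := ∃ m : Fin 3, LaminateWith ε U A E m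

/-!
Write the lattice points of `Q_η(i)` as `ε • n` with `n` in an integer box `[a, b]`. Local
flatness says that on every unit cell `[κ, κ + 1]` with `κ ∈ [a, b]`, membership in `E` depends on
at most one coordinate. A jump of membership between `x` and `x + e_j` forces that coordinate to be
`j` on the cell at `x`, so the jump persists when `x` moves in any direction other than `j`. Jumps
in two directions `j ≠ m` can therefore be transported to a common cell, which is impossible. Hence
all jumps point in a single direction `m`, and membership is constant on every slice `n m = const`
of the box.
-/

theorem iff_of_mem_Icc_of_iff_succ {g : ℤ → Prop} {a b : ℤ}
    (hg : ∀ n, a ≤ n → n + 1 ≤ b → (g n ↔ g (n + 1))) {s t : ℤ}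
    (hs : s ∈ Icc a b) (ht : t ∈ Icc a b) : g s ↔ g t := by
  have from_left : ∀ n, a ≤ n → n ≤ b → (g a ↔ g n) := by
    intro n hn
    induction n, hn using Int.leInduction with
    | base => exact fun _ => Iff.rfl
    | succ n hn ih => exact fun hnb => (ih (by omega)).trans (hg n hn hnb)
  exact (from_left s hs.1 hs.2).symm.trans (from_left t ht.1 ht.2)

section Combinatorics

variable {ι : Type*}

def DeterminedByCoord (f : (ι → ℤ) → Prop) (S : Set (ι → ℤ)) (m : ι) : Prop :=
  ∀ c ∈ S, ∀ c' ∈ S, c m = c' m → (f c ↔ f c')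

theorem mem_Icc_self_add_one {x c : ι → ℤ} (hc : ∀ k, c k = x k ∨ c k = x k + 1) :
    c ∈ Icc x (x + 1) :=
  ⟨fun k => by rcases hc k with h | h <;> simp [h],
    fun k => by rcases hc k with h | h <;> simp [h]⟩

variable [DecidableEq ι] {f : (ι → ℤ) → Prop}

theorem update_add_single_one (z : ι → ℤ) (l : ι) (n : ℤ) :
    Function.update z l n + Pi.single l 1 = Function.update z l (n + 1) := by
  ext k
  by_cases hk : k = l
  · subst hk; simp
  · simp [hk]

theorem update_mem_Icc {a b z : ι → ℤ} (hz : z ∈ Icc a b) {l : ι} {n : ℤ}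
    (hn : n ∈ Icc (a l) (b l)) : Function.update z l n ∈ Icc a b := by
  simp only [mem_Icc, le_update_iff, update_le_iff]
  exact ⟨⟨hn.1, fun k _ => hz.1 k⟩, ⟨hn.2, fun k _ => hz.2 k⟩⟩

theorem iff_of_apply_eq_of_iff_add_single [Fintype ι] {P : (ι → ℤ) → Prop} {a b : ι → ℤ} {m : ι}
    (hP : ∀ l ≠ m, ∀ x ∈ Icc a b, x + Pi.single l 1 ∈ Icc a b → (P x ↔ P (x + Pi.single l 1)))
    {x y : ι → ℤ} (hx : x ∈ Icc a b) (hy : y ∈ Icc a b) (hxy : x m = y m) : P x ↔ P y := by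
  suffices ∀ s : Finset ι, P x ↔ P (s.piecewise y x) by simpa using this Finset.univ
  intro s
  induction s using Finset.induction_on with
  | empty => simp
  | insert l s hl ih =>
    rw [Finset.piecewise_insert]
    set z := s.piecewise y x
    have hz : z ∈ Icc a b := Finset.piecewise_mem_Icc_of_mem_of_mem _ hy hx
    refine ih.trans ?_
    have hzl : z l = x l := Finset.piecewise_eq_of_notMem _ _ _ hl
    by_cases hlm : l = m
    · subst hlm
      rw [← hxy, ← hzl, Function.update_eq_self]
    · have step (n : ℤ) (han : a l ≤ n) (hnb : n + 1 ≤ b l) :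
          P (Function.update z l n) ↔ P (Function.update z l (n + 1)) := by
        rw [← update_add_single_one]
        refine hP l hlm _ (update_mem_Icc hz ⟨han, by omega⟩) ?_
        rw [update_add_single_one]
        exact update_mem_Icc hz ⟨by omega, hnb⟩
      simpa using iff_of_mem_Icc_of_iff_succ (g := fun n => P (Function.update z l n)) step
        ⟨hz.1 l, hz.2 l⟩ ⟨hy.1 l, hy.2 l⟩

theorem DeterminedByCoord.eq_of_not_iff {x : ι → ℤ} {m j : ι}
    (h : DeterminedByCoord f (Icc x (x + 1)) m) (hjump : ¬(f x ↔ f (x + Pi.single j 1))) :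
    m = j := by
  by_contra hmj
  refine hjump (h x (mem_Icc_self_add_one fun k => .inl rfl) _
    (mem_Icc_self_add_one fun k => ?_) ?_)
  · by_cases hk : k = j <;> simp [hk]
  · simp [hmj]

theorem DeterminedByCoord.jump_iff {x : ι → ℤ} {m j l : ι}
    (h : DeterminedByCoord f (Icc x (x + 1)) m) (hlj : l ≠ j) :
    (f x ↔ f (x + Pi.single j 1)) ↔
      (f (x + Pi.single l 1) ↔ f (x + Pi.single l 1 + Pi.single j 1)) := by
  have hx := mem_Icc_self_add_one (c := x) fun k => .inl rfl
  have hl : x + Pi.single l 1 ∈ Icc x (x + 1) :=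
    mem_Icc_self_add_one fun k => by by_cases hk : k = l <;> simp [hk]
  have hj : x + Pi.single j 1 ∈ Icc x (x + 1) :=
    mem_Icc_self_add_one fun k => by by_cases hk : k = j <;> simp [hk]
  have hlj' : x + Pi.single l 1 + Pi.single j 1 ∈ Icc x (x + 1) :=
    mem_Icc_self_add_one fun k => by
      by_cases hk : k = j <;> by_cases hk' : k = l <;> simp_all
  by_cases hmj : m = j
  · subst hmj
    rw [h x hx _ hl (by simp [hlj]), h _ hj _ hlj' (by simp [hlj])]
  · rw [iff_true_intro (h x hx _ hj (by simp [hmj])),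
      iff_true_intro (h _ hl _ hlj' (by simp [hmj]))]

variable [Fintype ι] {a b : ι → ℤ}
  (hcell : ∀ x ∈ Icc a b, ∃ m, DeterminedByCoord f (Icc x (x + 1)) m)
include hcell

theorem jump_iff_of_apply_eq {j : ι} {x y : ι → ℤ} (hx : x ∈ Icc a (b - Pi.single j 1))
    (hy : y ∈ Icc a (b - Pi.single j 1)) (hxy : x j = y j) :
    (f x ↔ f (x + Pi.single j 1)) ↔ (f y ↔ f (y + Pi.single j 1)) := by
  refine iff_of_apply_eq_of_iff_add_single (P := fun x => f x ↔ f (x + Pi.single j 1))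
    (fun l hlj z hz _ => ?_) hx hy hxy
  obtain ⟨m, hm⟩ := hcell z (Icc_subset_Icc_right (sub_le_self _ (by simp)) hz)
  exact hm.jump_iff hlj

theorem eq_of_not_iff_of_not_iff {j m : ι} {p q : ι → ℤ} (hp : p ∈ Icc a (b - Pi.single j 1))
    (hq : q ∈ Icc a (b - Pi.single m 1)) (hpj : ¬(f p ↔ f (p + Pi.single j 1)))
    (hqm : ¬(f q ↔ f (q + Pi.single m 1))) : j = m := by
  by_contra hjm
  -- `r` carries the `j`-jump of `p` and the `m`-jump of `q`, which no single cell allows.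
  set r := Function.update q j (p j)
  have hsub (l : ι) : b - Pi.single l 1 ≤ b := sub_le_self _ (by simp)
  have hpb : p j ≤ b j := by simpa using (hp.2.trans (hsub j)) j
  have hr_j : r ∈ Icc a (b - Pi.single j 1) :=
    ⟨le_update_iff.2 ⟨hp.1 j, fun k _ => hq.1 k⟩,
      update_le_iff.2 ⟨hp.2 j, fun k hk => by simpa [hk] using (hq.2.trans (hsub m)) k⟩⟩
  have hr_m : r ∈ Icc a (b - Pi.single m 1) :=
    ⟨le_update_iff.2 ⟨hp.1 j, fun k _ => hq.1 k⟩,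
      update_le_iff.2 ⟨by simpa [hjm] using hpb, fun k _ => hq.2 k⟩⟩
  obtain ⟨m', hm'⟩ := hcell r (Icc_subset_Icc_right (hsub j) hr_j)
  have hrj := (jump_iff_of_apply_eq hcell hp hr_j (by simp [r])).not.mp hpj
  have hrm := (jump_iff_of_apply_eq hcell hq hr_m (by simp [r, Ne.symm hjm])).not.mp hqm
  exact hjm ((hm'.eq_of_not_iff hrj).symm.trans (hm'.eq_of_not_iff hrm))

theorem exists_determinedByCoord_of_cells [Nonempty ι] : ∃ m, DeterminedByCoord f (Icc a b) m := by
  obtain ⟨m, hm⟩ : ∃ m, ∀ l ≠ m, ∀ x ∈ Icc a (b - Pi.single l 1), f x ↔ f (x + Pi.single l 1) := by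
    by_contra! H
    obtain ⟨l₁, -, p, hp, hp'⟩ := H (Classical.arbitrary ι)
    obtain ⟨l₂, hl, q, hq, hq'⟩ := H l₁
    exact hl (eq_of_not_iff_of_not_iff hcell hq hp (by tauto) (by tauto))
  exact ⟨m, fun x hx y hy hxy => iff_of_apply_eq_of_iff_add_single
    (fun l hl z hz hz' => hm l hl z ⟨hz.1, le_sub_iff_add_le.2 hz'.2⟩) hx hy hxy⟩

end Combinatorics

def latticePoint (ε : ℝ) (n : Fin 3 → ℤ) : E3 := WithLp.toLp 2 fun j => ε * n j

@[simp]
theorem latticePoint_apply (ε : ℝ) (n : Fin 3 → ℤ) (j : Fin 3) : latticePoint ε n j = ε * n j :=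
  rfl

theorem lat_latticePoint (ε : ℝ) (n : Fin 3 → ℤ) : lat ε (latticePoint ε n) :=
  fun j => ⟨n j, rfl⟩

theorem lat.exists_eq_latticePoint {ε : ℝ} {p : E3} (h : lat ε p) : ∃ n, p = latticePoint ε n := by
  choose n hn using h
  exact ⟨n, by ext j; exact hn j⟩

theorem exists_Icc_iff_latticePoint_mem_cube {ε : ℝ} (hε : 0 < ε) (η : ℝ) (x : E3) :
    ∃ a b : Fin 3 → ℤ, ∀ n, latticePoint ε n ∈ cube η x ↔ n ∈ Icc a b := by
  refine ⟨fun j => ⌈(x j - η / 2) / ε⌉, fun j => ⌈(x j + η / 2) / ε⌉ - 1, fun n => ?_⟩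
  simp only [cube, mem_ofPred_eq, latticePoint_apply, mem_Icc, Pi.le_def, ← forall_and]
  refine forall_congr' fun j => and_congr ?_ ?_
  · rw [Int.ceil_le, div_le_iff₀ hε, mul_comm]
  · rw [Int.le_sub_one_iff, Int.lt_ceil, lt_div_iff₀ hε, mul_comm]

theorem latticePoint_mem_cube_hat {ε : ℝ} (hε : 0 < ε) {κ c : Fin 3 → ℤ} (hc : c ∈ Icc κ (κ + 1)) :
    latticePoint ε c ∈ cube (2 * ε) (hat ε (latticePoint ε κ)) := by
  intro j
  have h₁ : (κ j : ℝ) ≤ c j := by exact_mod_cast hc.1 j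
  have h₂ : (c j : ℝ) ≤ κ j + 1 := by exact_mod_cast hc.2 j
  simp only [hat, latticePoint_apply, PiLp.toLp_apply]
  constructor <;> nlinarith

theorem cube_subset_cube_of_mem {ρ σ τ : ℝ} {x y z : E3} (hy : y ∈ cube ρ x) (hy' : y ∈ cube σ z)
    (h : ρ + 2 * σ ≤ τ) : cube σ z ⊆ cube τ x := by
  intro w hw j
  have := hy j; have := hy' j; have := hw j
  constructor <;> linarith

theorem LocallyFlat.exists_determinedByCoord_cube_hat {ε η : ℝ} {U E : Set E3} {x k : E3}
    (hflat : LocallyFlat ε η U E x) (hk : lat ε k)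
    (hmeet : (cube η x ∩ cube (2 * ε) (hat ε k)).Nonempty) (hU : cube (2 * ε) (hat ε k) ⊆ U) :
    ∃ m : Fin 3, ∀ p ∈ Zset ε (cube (2 * ε) (hat ε k)), ∀ q ∈ Zset ε (cube (2 * ε) (hat ε k)),
      p m = q m → (p ∈ E ↔ q ∈ E) := by
  have inter : ∀ p ∈ Zset ε (cube (2 * ε) (hat ε k)), p ∈ E ↔ p ∈ E ∩ cube (2 * ε) (hat ε k) :=
    fun p hp => (and_iff_left hp.2).symm
  rcases hflat k hk hmeet with h | h | ⟨m, v, -, h⟩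
  · refine ⟨0, fun p hp q hq _ => iff_of_true ?_ ?_⟩
    · exact (inter p hp).2 (h ▸ ⟨hp, hU hp.2⟩)
    · exact (inter q hq).2 (h ▸ ⟨hq, hU hq.2⟩)
  · exact ⟨0, fun p hp q hq _ => by simp [inter p hp, inter q hq, h]⟩
  · refine ⟨m, fun p hp q hq hpq => ?_⟩
    simp [inter p hp, inter q hq, h, halfPattern, hp.1, hp.2, hq.1, hq.2, hU hp.2, hU hq.2, hpq]

theorem LocallyFlat.exists_determinedByCoord {ε η : ℝ} (hε : 0 < ε) {U E : Set E3} {x : E3}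
    (hQU : cube (η + 4 * ε) x ⊆ U) (hflat : LocallyFlat ε η U E x) :
    ∃ m : Fin 3, ∀ p ∈ Zset ε (cube η x), ∀ q ∈ Zset ε (cube η x),
      p m = q m → (p ∈ E ↔ q ∈ E) := by
  obtain ⟨a, b, hbox⟩ := exists_Icc_iff_latticePoint_mem_cube hε η x
  have hcell (κ) (hκ : κ ∈ Icc a b) :
      ∃ m, DeterminedByCoord (fun n => latticePoint ε n ∈ E) (Icc κ (κ + 1)) m := by
    have hκQ : latticePoint ε κ ∈ cube (2 * ε) (hat ε (latticePoint ε κ)) :=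
      latticePoint_mem_cube_hat hε (left_mem_Icc.2 (le_add_of_nonneg_right zero_le_one))
    have hκx := (hbox κ).2 hκ
    obtain ⟨m, hm⟩ := hflat.exists_determinedByCoord_cube_hat (lat_latticePoint ε κ) ⟨_, hκx, hκQ⟩
      fun z hz => hQU (cube_subset_cube_of_mem hκx hκQ (by linarith) hz)
    exact ⟨m, fun c hc c' hc' hcc' => hm _ ⟨lat_latticePoint ε c, latticePoint_mem_cube_hat hε hc⟩
      _ ⟨lat_latticePoint ε c', latticePoint_mem_cube_hat hε hc'⟩ (by simp [hcc'])⟩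
  obtain ⟨m, hm⟩ := exists_determinedByCoord_of_cells hcell
  refine ⟨m, fun p hp q hq hpq => ?_⟩
  obtain ⟨np, rfl⟩ := hp.1.exists_eq_latticePoint
  obtain ⟨nq, rfl⟩ := hq.1.exists_eq_latticePoint
  exact hm np ((hbox np).1 hp.2) nq ((hbox nq).1 hq.2) (by simpa [hε.ne'] using hpq)

theorem laminateWith_of_forall_iff {ε : ℝ} {U A E : Set E3} {m : Fin 3}
    (h : ∀ p ∈ Zset ε A, ∀ q ∈ Zset ε A, p m = q m → (p ∈ E ↔ q ∈ E)) :
    LaminateWith ε U A E m := by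
  refine ⟨fun v => ∃ p ∈ Zset ε A ∩ E, p m = v, fun q _ => ⟨fun hq => ⟨⟨q, hq, rfl⟩, hq.1⟩, ?_⟩⟩
  rintro ⟨⟨p, ⟨hp, hpE⟩, hpq⟩, hq⟩
  exact ⟨hq, (h p hp q hq hpq).1 hpE⟩

theorem statement0_general (ε η : ℝ) (hε : 0 < ε) (U : Set E3) (i : E3)
    (hQU : cube (η + 4 * ε) i ⊆ U) (E : Set E3) (hflat : LocallyFlat ε η U E i) :
    Laminate ε U (cube η i) E := by
  obtain ⟨m, hm⟩ := hflat.exists_determinedByCoord hε hQU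
  exact ⟨m, laminateWith_of_forall_iff hm⟩

/-- Lemma 3.2, "Laminates".  If `Q_{η+4ε}(i) ⊆ U` and `E ⊆ Z_ε(Ω)` is
locally flat in `Q_η(i)` with respect to `U`, then `E` is a simple coordinate laminate
in `Q_η(i)`. -/
theorem statement0 (ε ηε η : ℝ) (hε : 0 < ε) (hηε : 0 < ηε)
    (hratio : ∃ n : ℕ, ηε = (n : ℝ) * ε)
    (Ω U : Set E3) (hΩ : IsOpen Ω) (hU : IsOpen U) (hΩU : Ω ⊆ U)
    (i : E3) (hi : i ∈ Zset ε U) (hη : ηε ≤ η)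
    (hQU : cube (η + 4 * ε) i ⊆ U)
    (E : Set E3) (hE : E ⊆ Zset ε Ω)
    (hflat : LocallyFlat ε η U E i) :
    Laminate ε U (cube η i) E :=
  statement0_general ε η hε U i hQU E hflat
end
end

section
/- Let ε, η_ε > 0 with η_ε/ε ∈ ℕ, let Ω ⊆ U be open subsets of ℝ³, and let i ∈ η_εℤ³ be such that Q_{3η_ε}(i) ⊆ Ω. Let E ⊆ Z_ε(Ω) be a simple coordinate laminate in Q_{3η_ε}(i) and let E_{η_ε} be its η_ε-scale replacement. Then F^per_ε(E_{η_ε}, Q_{η_ε}(i)) ≤ F^per_ε(E, Q_{η_ε}(i)). -/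
open Set Filter MeasureTheory Metric
open scoped BigOperators ENNReal Topology

noncomputable section

attribute [local instance] Classical.propDecidable

/-- Embedding of `ℤ³` into `ℝ³`. -/
def toE3 (ξ : Fin 3 → ℤ) : E3 := WithLp.toLp 2 (fun j => (ξ j : ℝ))

/-- The coordinate unit vector `e_m` of `ℤ³`. -/
def unitZ (m : Fin 3) : Fin 3 → ℤ := fun j => if j = m then 1 else 0

/-- Discrete anisotropic perimeter energy
`F^per_ε(E,A) = Σ_{i ∈ Z_ε(A) ∩ E} Σ_{ξ ∈ V, i+εξ ∈ Z_ε(U)} ε² c_ξ (1 - χ_E(i+εξ))`. -/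
noncomputable def Fper (ε : ℝ) (V : Finset (Fin 3 → ℤ)) (c : (Fin 3 → ℤ) → ℝ)
    (U E A : Set E3) : ℝ :=
  ∑' i : ↥(Zset ε A ∩ E), ∑ ξ ∈ V,
    if (↑i + ε • toE3 ξ) ∈ Zset ε U ∧ (↑i + ε • toE3 ξ) ∉ E then ε ^ 2 * c ξ else 0

/-- Discrete curvature energy `F^curv_ε(E,A) = Σ_{i ∈ Z_ε(A)} ε³ W(i)`, where
`W i = W^curv_ε(i,E)`. -/
noncomputable def Fcurv (ε : ℝ) (W : E3 → ℝ) (A : Set E3) : ℝ :=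
  ∑' i : ↥(Zset ε A), ε ^ 3 * W ↑i

/-- `W` is a curvature cell energy at scale `ε`, mesoscale `ηm`, with parameters
`γ, q` and constants `0 < cc ≤ C0`, for subsets of `Z_ε(Ω)`, flatness being understood
with respect to `U`. -/
def IsCurvCell (ε ηm γ q cc C0 : ℝ) (Ω U : Set E3) (W : E3 → Set E3 → ℝ) : Prop :=
  (∀ i E, lat ε i → E ⊆ Zset ε Ω → 0 ≤ W i E) ∧
  (∀ i E, lat ε i → E ⊆ Zset ε Ω → FlatSet ε ηm U E i → W i E = 0) ∧
  (∀ i E, lat ε i → E ⊆ Zset ε Ω → ¬ LocallyFlat ε ηm U E i →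
      cc * γ * ηm ^ (-1 - q : ℝ) ≤ W i E) ∧
  (∀ i E, lat ε i → E ⊆ Zset ε Ω → CubicSet ε ηm ηm U E i →
      W i E ≤ C0 * γ * ηm ^ (-1 - q : ℝ))

/-- The `ηm`-scale replacement
`E_{ηm} := ⋃ {Z_ε(Q_{ηm}(i)) : i ∈ ηmℤ³, E ∩ Q_{ηm}(i) ≠ ∅} ∩ Ω`. -/
def etaRepl (ε ηm : ℝ) (Ω E : Set E3) : Set E3 :=
  {x | lat ε x ∧ x ∈ Ω ∧
    ∃ i : E3, (∀ j, ∃ n : ℤ, i j = ηm * n) ∧ x ∈ cube ηm i ∧ (E ∩ cube ηm i).Nonempty}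

/-!
Inside `Q_η(i)` the replacement `E_η` is empty unless `E` meets `Q_η(i)`. A bond of `E_η` broken in
direction `ξ` ends in a neighbouring cube of the `η`-grid that misses `E`; since `E` is a laminate
with normal `e_m`, that cube cannot share its `m`-range with `Q_η(i)`, so every such bond starts
on the outermost lattice layer of `Q_η(i)` in direction `ξ_m = ±1`. On `Z_ε(Q_{3η}(i))` membership
in `E` is a condition `h` on the `m`-th coordinate alone; it holds at a point of `E ∩ Q_η(i)` and
fails at the end of a broken bond, so `h` has an interface level `t` inside `Q_η(i)`. Resetting the `m`-th coordinate to `t` maps the broken bonds of `E_η` injectively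
to broken bonds of `E` in the same direction.
-/

lemma exists_lt_and_not_succ {P : ℕ → Prop} {N : ℕ} (h0 : P 0) (hN : ¬P N) :
    ∃ k < N, P k ∧ ¬P (k + 1) := by
  induction N with
  | zero => exact absurd h0 hN
  | succ N ih =>
    by_cases hP : P N
    · exact ⟨N, N.lt_succ_self, hP, hN⟩
    · obtain ⟨k, hk, hPk, hPk1⟩ := ih hP
      exact ⟨k, hk.trans N.lt_succ_self, hPk, hPk1⟩

lemma Int.exists_interface {P : ℤ → Prop} {A B p q s : ℤ} (hs : s = 1 ∨ s = -1)
    (hp : p ∈ Ico A B) (hPp : P p) (hq : q ∈ Ico A B) (hqs : q + s ∉ Ico A B)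
    (hPqs : ¬P (q + s)) : ∃ j ∈ Ico A B, P j ∧ ¬P (j + s) := by
  simp only [mem_Ico] at hp hq hqs ⊢
  have hN : p + s * (s * (q + s - p)).toNat = q + s := by rcases hs with rfl | rfl <;> omega
  obtain ⟨k, hk, hPk, hPk1⟩ := exists_lt_and_not_succ (P := fun k : ℕ => P (p + s * k))
    (by simpa using hPp) (by rwa [hN])
  refine ⟨p + s * k, ?_, hPk, ?_⟩
  · rcases hs with rfl | rfl <;> omega
  · convert hPk1 using 2; push_cast; ring

lemma mul_mem_Ico_iff_ceil {ε : ℝ} (hε : 0 < ε) (lo hi : ℝ) (p : ℤ) :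
    ε * p ∈ Ico lo hi ↔ p ∈ Ico ⌈lo / ε⌉ ⌈hi / ε⌉ := by
  rw [mem_Ico, mem_Ico, Int.ceil_le, Int.lt_ceil, div_le_iff₀ hε, lt_div_iff₀ hε,
    mul_comm (p : ℝ)]

lemma exists_interface {ε : ℝ} (hε : 0 < ε) {h : ℝ → Prop} {lo hi : ℝ} {p q s : ℤ}
    (hs : s = 1 ∨ s = -1) (hp : ε * p ∈ Ico lo hi) (hhp : h (ε * p)) (hq : ε * q ∈ Ico lo hi)
    (hqs : ε * (q + s) ∉ Ico lo hi) (hhqs : ¬h (ε * (q + s))) :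
    ∃ j : ℤ, ε * j ∈ Ico lo hi ∧ h (ε * j) ∧ ¬h (ε * (j + s)) := by
  rw [← Int.cast_add] at hqs hhqs
  simp only [mul_mem_Ico_iff_ceil hε] at hp hq hqs ⊢
  simpa only [Int.cast_add] using Int.exists_interface (P := fun j : ℤ => h (ε * j)) hs hp hhp hq hqs hhqs

lemma eq_of_mem_Ico_of_add_not_mem {ε : ℝ} (hε : 0 < ε) {lo hi : ℝ} {q q' s : ℤ}
    (hs : s = 1 ∨ s = -1) (hq : ε * q ∈ Ico lo hi) (hqs : ε * (q + s) ∉ Ico lo hi)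
    (hq' : ε * q' ∈ Ico lo hi) (hq's : ε * (q' + s) ∉ Ico lo hi) : q = q' := by
  rw [← Int.cast_add] at hqs hq's
  simp only [mul_mem_Ico_iff_ceil hε, mem_Ico] at hq hqs hq' hq's
  rcases hs with rfl | rfl <;> omega

lemma mem_Ico_iff_eq_floor {η : ℝ} (hη : 0 < η) (a : ℤ) (y : ℝ) :
    y ∈ Ico (η * a - η / 2) (η * a + η / 2) ↔ a = ⌊y / η + 1 / 2⌋ := by
  rw [mem_Ico, eq_comm, Int.floor_eq_iff, ← sub_le_iff_le_add, le_div_iff₀ hη,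
    ← lt_sub_iff_add_lt, div_lt_iff₀ hη]
  constructor <;> rintro ⟨h1, h2⟩ <;> constructor <;> linarith

lemma eq_of_mem_Ico_of_mem_Ico {η : ℝ} (hη : 0 < η) {u v y : ℝ} (hu : ∃ n : ℤ, u = η * n)
    (hv : ∃ n : ℤ, v = η * n) (hyu : y ∈ Ico (u - η / 2) (u + η / 2))
    (hyv : y ∈ Ico (v - η / 2) (v + η / 2)) : u = v := by
  obtain ⟨a, rfl⟩ := hu
  obtain ⟨b, rfl⟩ := hv
  rw [mem_Ico_iff_eq_floor hη] at hyu hyv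
  rw [hyu, hyv]

def withCoord (x : E3) (m : Fin 3) (t : ℝ) : E3 :=
  WithLp.toLp 2 (Function.update (WithLp.ofLp x) m t)

@[simp] lemma withCoord_apply_self (x : E3) (m : Fin 3) (t : ℝ) : withCoord x m t m = t := by
  simp [withCoord]

@[simp] lemma withCoord_apply_of_ne (x : E3) {m j : Fin 3} (t : ℝ) (hj : j ≠ m) :
    withCoord x m t j = x j := by
  simp [withCoord, hj]

lemma eq_of_withCoord_eq {x x' : E3} {m : Fin 3} {t : ℝ} (h : withCoord x m t = withCoord x' m t)
    (hm : x m = x' m) : x = x' := by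
  ext j
  by_cases hj : j = m
  · rwa [hj]
  · simpa [hj] using congrArg (· j) h

lemma lat_withCoord {ε : ℝ} {x : E3} (hx : lat ε x) (m : Fin 3) {t : ℝ}
    (ht : ∃ n : ℤ, t = ε * n) : lat ε (withCoord x m t) := by
  intro j
  by_cases hj : j = m
  · subst hj; simpa using ht
  · simpa [hj] using hx j

lemma withCoord_mem_cube {ρ t : ℝ} {x k : E3} {m : Fin 3} (hx : x ∈ cube ρ k)
    (ht : t ∈ Ico (k m - ρ / 2) (k m + ρ / 2)) : withCoord x m t ∈ cube ρ k := by
  intro j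
  by_cases hj : j = m
  · subst hj; simpa using ht
  · simpa [hj] using hx j

lemma cube_mono {ρ ρ' : ℝ} (h : ρ ≤ ρ') (x : E3) : cube ρ x ⊆ cube ρ' x := fun y hy j =>
  ⟨by linarith [(hy j).1], by linarith [(hy j).2]⟩

lemma finite_Zset_cube {ε : ℝ} (hε : 0 < ε) (ρ : ℝ) (x : E3) : (Zset ε (cube ρ x)).Finite := by
  have hsub : Zset ε (cube ρ x) ⊆ (fun z : Fin 3 → ℤ => (WithLp.toLp 2 fun j => ε * z j : E3)) ''
      univ.pi fun j => Icc ⌈(x j - ρ / 2) / ε⌉ ⌊(x j + ρ / 2) / ε⌋ := by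
    rintro y ⟨hy, hyx⟩
    choose p hp using hy
    refine ⟨p, fun j _ => ?_, PiLp.ext fun j => (hp j).symm⟩
    have hyj := hyx j
    rw [hp j] at hyj
    constructor
    · rw [Int.ceil_le, div_le_iff₀ hε]; linarith
    · rw [Int.le_floor, le_div_iff₀ hε]; linarith
  exact ((Finite.pi fun _ => finite_Icc _ _).image _).subset hsub

@[simp] lemma add_smul_toE3_apply (x : E3) (ε : ℝ) (ξ : Fin 3 → ℤ) (j : Fin 3) :
    (x + ε • toE3 ξ) j = x j + ε * ξ j := rfl

lemma lat_add_smul_toE3 {ε : ℝ} {x : E3} (hx : lat ε x) (ξ : Fin 3 → ℤ) :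
    lat ε (x + ε • toE3 ξ) := by
  intro j
  obtain ⟨p, hp⟩ := hx j
  exact ⟨p + ξ j, by rw [add_smul_toE3_apply, hp]; push_cast; ring⟩

lemma add_smul_toE3_mem_cube {ε ρ : ℝ} (hε : 0 ≤ ε) {ξ : Fin 3 → ℤ} (hξ : ∀ j, |ξ j| ≤ 1)
    {x k : E3} (hx : x ∈ cube ρ k) : x + ε • toE3 ξ ∈ cube (ρ + 2 * ε) k := by
  intro j
  have hξj : |ε * ξ j| ≤ ε := by
    rw [abs_mul, abs_of_nonneg hε]
    exact mul_le_of_le_one_right hε (by exact_mod_cast hξ j)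
  rw [add_smul_toE3_apply]
  constructor <;> linarith [abs_le.mp hξj, (hx j).1, (hx j).2]

lemma exists_mem_cube {η : ℝ} (hη : 0 < η) (y : E3) :
    ∃ k : E3, (∀ j, ∃ n : ℤ, k j = η * n) ∧ y ∈ cube η k :=
  ⟨WithLp.toLp 2 fun j => η * ⌊y j / η + 1 / 2⌋, fun _ => ⟨_, rfl⟩,
    fun _ => (mem_Ico_iff_eq_floor hη _ _).mpr rfl⟩

lemma eq_of_mem_cube_of_mem_cube {η : ℝ} (hη : 0 < η) {k k' y : E3}
    (hk : ∀ j, ∃ n : ℤ, k j = η * n) (hk' : ∀ j, ∃ n : ℤ, k' j = η * n)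
    (hy : y ∈ cube η k) (hy' : y ∈ cube η k') : k = k' := by
  ext j
  exact eq_of_mem_Ico_of_mem_Ico hη (hk j) (hk' j) (hy j) (hy' j)

lemma subset_etaRepl {ε η : ℝ} (hη : 0 < η) {Ω E : Set E3} (hE : E ⊆ Zset ε Ω) :
    E ⊆ etaRepl ε η Ω E := fun y hy =>
  have ⟨k, hk, hyk⟩ := exists_mem_cube hη y
  ⟨(hE hy).1, (hE hy).2, k, hk, hyk, y, hy, hyk⟩

lemma nonempty_of_mem_etaRepl_of_mem_cube {ε η : ℝ} (hη : 0 < η) {Ω E : Set E3} {i x : E3}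
    (hi : ∀ j, ∃ n : ℤ, i j = η * n) (hx : x ∈ etaRepl ε η Ω E) (hxi : x ∈ cube η i) :
    (E ∩ cube η i).Nonempty := by
  obtain ⟨-, -, k, hk, hxk, hE⟩ := hx
  rwa [eq_of_mem_cube_of_mem_cube hη hk hi hxk hxi] at hE

lemma LaminateWith.exists_mem_iff {ε : ℝ} {U A E : Set E3} {m : Fin 3}
    (hlam : LaminateWith ε U A E m) (hAU : A ⊆ U) :
    ∃ h : ℝ → Prop, ∀ y, lat ε y → y ∈ A → (y ∈ E ↔ h (y m)) := by
  obtain ⟨h, hh⟩ := hlam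
  refine ⟨h, fun y hy hyA => ?_⟩
  have := hh y ⟨hy, hAU hyA⟩
  exact ⟨fun hyE => (this.mp ⟨⟨hy, hyA⟩, hyE⟩).1, fun hhy => (this.mpr ⟨hhy, hy, hyA⟩).2⟩

def brokenBonds (ε : ℝ) (U E A : Set E3) (ξ : Fin 3 → ℤ) : Set E3 :=
  {x | x ∈ Zset ε A ∩ E ∧ x + ε • toE3 ξ ∈ Zset ε U ∧ x + ε • toE3 ξ ∉ E}

lemma Fper_eq_sum_ncard {ε : ℝ} (V : Finset (Fin 3 → ℤ)) (c : (Fin 3 → ℤ) → ℝ) (U E : Set E3)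
    {A : Set E3} (hA : (Zset ε A).Finite) :
    Fper ε V c U E A = ∑ ξ ∈ V, ε ^ 2 * c ξ * (brokenBonds ε U E A ξ).ncard := by
  have hS := hA.inter_of_left E
  rw [Fper, ← hS.coe_toFinset, Finset.tsum_subtype' _ fun x => ∑ ξ ∈ V,
    if x + ε • toE3 ξ ∈ Zset ε U ∧ x + ε • toE3 ξ ∉ E then ε ^ 2 * c ξ else 0, Finset.sum_comm]
  refine Finset.sum_congr rfl fun ξ _ => ?_
  rw [← Finset.sum_filter, Finset.sum_const, nsmul_eq_mul, mul_comm, ← ncard_coe_finset]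
  congr 3
  ext x
  simp [brokenBonds]

section Laminate

variable {ε η : ℝ} {Ω U E : Set E3} {i : E3} {m : Fin 3} {h : ℝ → Prop} {ξ : Fin 3 → ℤ}

lemma add_smul_toE3_mem_cube_three_mul (hε : 0 ≤ ε) (hεη : ε ≤ η) (hξ : ∀ j, |ξ j| ≤ 1)
    {x : E3} (hx : x ∈ cube η i) : x + ε • toE3 ξ ∈ cube (3 * η) i :=
  cube_mono (by linarith) i (add_smul_toE3_mem_cube hε hξ hx)

lemma exists_level_of_mem_brokenBonds_etaRepl (hε : 0 < ε) (hεη : ε ≤ η)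
    (hi : ∀ j, ∃ n : ℤ, i j = η * n) (hQΩ : cube (3 * η) i ⊆ Ω) (hE : E ⊆ Zset ε Ω)
    (hmem : ∀ y, lat ε y → y ∈ cube (3 * η) i → (y ∈ E ↔ h (y m))) (hξ : ∀ j, |ξ j| ≤ 1)
    {e x : E3} (he : e ∈ E ∩ cube η i) (hx : x ∈ brokenBonds ε U (etaRepl ε η Ω E) (cube η i) ξ) :
    ∃ q : ℤ, x m = ε * q ∧ ε * q ∈ Ico (i m - η / 2) (i m + η / 2) ∧
      ε * (q + ξ m) ∉ Ico (i m - η / 2) (i m + η / 2) := by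
  have hη : 0 < η := hε.trans_le hεη
  obtain ⟨⟨⟨hxl, hxQ⟩, -⟩, -, hyE⟩ := hx
  obtain ⟨q, hq⟩ := hxl m
  refine ⟨q, hq, hq ▸ hxQ m, fun hyI => hyE ?_⟩
  set y := x + ε • toE3 ξ
  have hy3 : y ∈ cube (3 * η) i := add_smul_toE3_mem_cube_three_mul hε.le hεη hξ hxQ
  have hyl : lat ε y := lat_add_smul_toE3 hxl ξ
  obtain ⟨k, hk, hyk⟩ := exists_mem_cube hη y
  have hkm : k m = i m := by
    refine eq_of_mem_Ico_of_mem_Ico hη (hk m) (hi m) (hyk m) ?_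
    rwa [add_smul_toE3_apply, hq, ← mul_add]
  have hel : lat ε e := (hE he.1).1
  have he3 : e ∈ cube (3 * η) i := cube_mono (by linarith) i he.2
  have hz3 : withCoord y m (e m) ∈ cube (3 * η) i := withCoord_mem_cube hy3 (he3 m)
  have hzE : withCoord y m (e m) ∈ E := by
    rw [hmem _ (lat_withCoord hyl m (hel m)) hz3, withCoord_apply_self]
    exact (hmem e hel he3).mp he.1
  exact ⟨hyl, hQΩ hy3, k, hk, hyk, _, hzE, withCoord_mem_cube hyk (hkm ▸ he.2 m)⟩

lemma withCoord_mem_brokenBonds_of_interface (hε : 0 ≤ ε) (hεη : ε ≤ η)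
    (hQΩ : cube (3 * η) i ⊆ Ω) (hΩU : Ω ⊆ U)
    (hmem : ∀ y, lat ε y → y ∈ cube (3 * η) i → (y ∈ E ↔ h (y m))) (hξ : ∀ j, |ξ j| ≤ 1)
    {t : ℤ} (htI : ε * t ∈ Ico (i m - η / 2) (i m + η / 2)) (hht : h (ε * t))
    (hhts : ¬h (ε * (t + ξ m))) {x : E3} (hx : x ∈ Zset ε (cube η i)) :
    withCoord x m (ε * t) ∈ brokenBonds ε U E (cube η i) ξ := by
  have hzl : lat ε (withCoord x m (ε * t)) := lat_withCoord hx.1 m ⟨t, rfl⟩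
  have hzQ : withCoord x m (ε * t) ∈ cube η i := withCoord_mem_cube hx.2 htI
  have hnbr := add_smul_toE3_mem_cube_three_mul hε hεη hξ hzQ
  refine ⟨⟨⟨hzl, hzQ⟩, ?_⟩, ⟨lat_add_smul_toE3 hzl ξ, hΩU (hQΩ hnbr)⟩, ?_⟩
  · rwa [hmem _ hzl (cube_mono (by linarith) i hzQ), withCoord_apply_self]
  · rwa [hmem _ (lat_add_smul_toE3 hzl ξ) hnbr, add_smul_toE3_apply, withCoord_apply_self,
      ← mul_add]

theorem ncard_brokenBonds_etaRepl_le (hε : 0 < ε) (hεη : ε ≤ η)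
    (hi : ∀ j, ∃ n : ℤ, i j = η * n) (hQΩ : cube (3 * η) i ⊆ Ω) (hΩU : Ω ⊆ U)
    (hE : E ⊆ Zset ε Ω) (hmem : ∀ y, lat ε y → y ∈ cube (3 * η) i → (y ∈ E ↔ h (y m)))
    (hξ : ∀ j, |ξ j| ≤ 1) :
    (brokenBonds ε U (etaRepl ε η Ω E) (cube η i) ξ).ncard ≤
      (brokenBonds ε U E (cube η i) ξ).ncard := by
  have hη : 0 < η := hε.trans_le hεη
  set B := brokenBonds ε U (etaRepl ε η Ω E) (cube η i) ξ
  rcases B.eq_empty_or_nonempty with hB | ⟨x₀, hx₀⟩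
  · simp [hB]
  obtain ⟨e, he⟩ := nonempty_of_mem_etaRepl_of_mem_cube hη hi hx₀.1.2 hx₀.1.1.2
  have hlevel := fun x (hx : x ∈ B) =>
    exists_level_of_mem_brokenBonds_etaRepl hε hεη hi hQΩ hE hmem hξ he hx
  obtain ⟨q₀, hq₀, hq₀I, hq₀s⟩ := hlevel x₀ hx₀
  have hs : ξ m = 1 ∨ ξ m = -1 := by
    have hξm := abs_le.mp (hξ m)
    by_cases h0 : ξ m = 0
    · rw [h0, Int.cast_zero, add_zero] at hq₀s; exact absurd hq₀I hq₀s
    · omega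
  obtain ⟨p, hp⟩ := (hE he.1).1 m
  have hpI : ε * p ∈ Ico (i m - η / 2) (i m + η / 2) := hp ▸ he.2 m
  have hhp : h (ε * p) := hp ▸ (hmem e (hE he.1).1 (cube_mono (by linarith) i he.2)).mp he.1
  have hhq₀s : ¬h (ε * (q₀ + ξ m)) := by
    have hyE : x₀ + ε • toE3 ξ ∉ E := fun hyE => hx₀.2.2 (subset_etaRepl hη hE hyE)
    rwa [hmem _ (lat_add_smul_toE3 hx₀.1.1.1 ξ)
      (add_smul_toE3_mem_cube_three_mul hε.le hεη hξ hx₀.1.1.2), add_smul_toE3_apply, hq₀,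
      ← mul_add] at hyE
  obtain ⟨t, htI, hht, hhts⟩ := exists_interface hε hs hpI hhp hq₀I hq₀s hhq₀s
  refine ncard_le_ncard_of_injOn (fun x => withCoord x m (ε * t)) ?_ ?_
    ((finite_Zset_cube hε η i).subset fun x hx => hx.1.1)
  · exact fun x hx => withCoord_mem_brokenBonds_of_interface hε.le hεη hQΩ hΩU hmem hξ htI hht
      hhts hx.1.1
  · intro x hx x' hx' hxx'
    obtain ⟨q, hq, hqI, hqs⟩ := hlevel x hx
    obtain ⟨q', hq', hq'I, hq's⟩ := hlevel x' hx'
    refine eq_of_withCoord_eq hxx' ?_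
    rw [hq, hq', eq_of_mem_Ico_of_add_not_mem hε hs hqI hqs hq'I hq's]

end Laminate

theorem statement3_general (ε ηm : ℝ) (hε : 0 < ε) (hηm : 0 < ηm)
    (hratio : ∃ n : ℕ, ηm = (n : ℝ) * ε)
    (Ω U : Set E3) (hΩU : Ω ⊆ U)
    (V : Finset (Fin 3 → ℤ)) (c : (Fin 3 → ℤ) → ℝ)
    (hV1 : ∀ ξ ∈ V, ∀ j, |ξ j| ≤ 1)
    (hcpos : ∀ ξ ∈ V, 0 < c ξ)
    (i : E3) (hi : ∀ j, ∃ n : ℤ, i j = ηm * n)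
    (hQΩ : cube (3 * ηm) i ⊆ Ω)
    (E : Set E3) (hE : E ⊆ Zset ε Ω)
    (hlam : Laminate ε U (cube (3 * ηm) i) E) :
    Fper ε V c U (etaRepl ε ηm Ω E) (cube ηm i) ≤ Fper ε V c U E (cube ηm i) := by
  obtain ⟨m, hlam⟩ := hlam
  obtain ⟨h, hmem⟩ := hlam.exists_mem_iff (hQΩ.trans hΩU)
  have hεη : ε ≤ ηm := by
    obtain ⟨n, rfl⟩ := hratio
    have hn : 0 < n := by exact_mod_cast pos_of_mul_pos_left hηm hε.le
    exact le_mul_of_one_le_left hε.le (Nat.one_le_cast.mpr hn)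
  rw [Fper_eq_sum_ncard _ _ _ _ (finite_Zset_cube hε ηm i),
    Fper_eq_sum_ncard _ _ _ _ (finite_Zset_cube hε ηm i)]
  refine Finset.sum_le_sum fun ξ hξ => mul_le_mul_of_nonneg_left ?_ (by positivity [hcpos ξ hξ])
  exact_mod_cast ncard_brokenBonds_etaRepl_le hε hεη hi hQΩ hΩU hE hmem (hV1 ξ hξ)

/-- Step 1.2 in the proof of Lemma 3.4: good cubes.  If `E` is a
simple coordinate laminate in `Q_{3η_ε}(i)` with `Q_{3η_ε}(i) ⊆ Ω` and `i ∈ η_εℤ³`, then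
the `η_ε`-scale replacement does not increase the discrete perimeter energy in
`Q_{η_ε}(i)`. -/
theorem statement3 (ε ηm : ℝ) (hε : 0 < ε) (hηm : 0 < ηm)
    (hratio : ∃ n : ℕ, ηm = (n : ℝ) * ε)
    (Ω U : Set E3) (hΩ : IsOpen Ω) (hU : IsOpen U) (hΩU : Ω ⊆ U)
    (V : Finset (Fin 3 → ℤ)) (c : (Fin 3 → ℤ) → ℝ)
    (hV0 : ∀ ξ ∈ V, ξ ≠ 0) (hV1 : ∀ ξ ∈ V, ∀ j, |ξ j| ≤ 1)
    (hVe : ∀ m : Fin 3, unitZ m ∈ V ∧ -unitZ m ∈ V)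
    (hVsymm : ∀ ξ ∈ V, -ξ ∈ V)
    (hcpos : ∀ ξ ∈ V, 0 < c ξ) (hcsymm : ∀ ξ ∈ V, c (-ξ) = c ξ)
    (i : E3) (hi : ∀ j, ∃ n : ℤ, i j = ηm * n)
    (hQΩ : cube (3 * ηm) i ⊆ Ω)
    (E : Set E3) (hE : E ⊆ Zset ε Ω)
    (hlam : Laminate ε U (cube (3 * ηm) i) E) :
    Fper ε V c U (etaRepl ε ηm Ω E) (cube ηm i) ≤ Fper ε V c U E (cube ηm i) :=
  statement3_general ε ηm hε hηm hratio Ω U hΩU V c hV1 hcpos i hi hQΩ E hE hlam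
end
end

section
/- Let Ω ⊂ ℝ³ be bounded and open, let E ⊆ ℝ³ be measurable with cl(E) ⊂ Ω, and let ε, η_ε > 0 with η_ε/ε ∈ ℕ and √3·η_ε < dist(E, ∂Ω). Define E_ε := ⋃_{i ∈ η_εℤ³ ∩ E} Z_ε(Q_{η_ε}(i)) ∩ Ω and Q_ε(E_ε) := ⋃_{j ∈ E_ε} Q_ε(j). Then (Q_ε(E_ε) ∩ Ω) △ E ⊆ {x ∈ ℝ³ : dist(x, ∂E) ≤ √3·(η_ε + ε)/2}. In particular, if L³(∂E) = 0 and η_ε → 0 as ε → 0, then χ_{Q_ε(E_ε) ∩ Ω} → χ_E in L¹(Ω). -/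
open Set Filter MeasureTheory Metric
open scoped BigOperators ENNReal Topology

noncomputable section

attribute [local instance] Classical.propDecidable

/-- The discrete recovery set `E_ε := ⋃_{i ∈ η_εℤ³ ∩ E} Z_ε(Q_{η_ε}(i)) ∩ Ω`. -/
def Eeps (ε ηm : ℝ) (Ω E : Set E3) : Set E3 :=
  {x | lat ε x ∧ x ∈ Ω ∧
    ∃ i : E3, (∀ j, ∃ n : ℤ, i j = ηm * n) ∧ i ∈ E ∧ x ∈ cube ηm i}

/-- `Q_ε(F) := ⋃_{j ∈ F} Q_ε(j)`. -/
def Qeps (ε : ℝ) (F : Set E3) : Set E3 := ⋃ j ∈ F, cube ε j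

/-!
Every point `x` of the symmetric difference is matched with a point on the other side of `E`:
if `x ∈ Q_ε(j) ∖ E` with `j ∈ Q_η(i)`, `i ∈ E`, take `i`; if `x ∈ E ∖ Q_ε(E_ε)`, round `x` to
the nearest point `j` of `εℤ³` and `j` to the nearest point `i` of `ηℤ³`, so that `i ∉ E`
(`j ∈ Ω` because `|x - j| ≤ √3 ε/2 ≤ √3 η < dist(E, ∂Ω)`).
In both cases `|x - i| ≤ √3 ε/2 + √3 η/2`, and the segment `[x, i]` crosses `∂E`.
Hence the symmetric difference lies in the closed `√3(η+ε)/2`-thickening of the closed bounded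
set `∂E`, whose measure tends to `L³(∂E) = 0`.
-/

lemma le_of_eq_natCast_mul {a b : ℝ} {m : ℕ} (ha : 0 ≤ a) (hb : 0 < b) (h : b = m * a) :
    a ≤ b := by
  have hm : m ≠ 0 := by rintro rfl; simp at h; linarith
  rw [h]
  exact le_mul_of_one_le_left ha (Nat.one_le_cast.2 (Nat.pos_of_ne_zero hm))

theorem IsPreconnected.inter_frontier_nonempty {X : Type*} [TopologicalSpace X] {s t : Set X}
    (hs : IsPreconnected s) (hst : (s ∩ t).Nonempty) (hst' : (s \ t).Nonempty) :
    (s ∩ frontier t).Nonempty := by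
  by_contra h
  have hcover : s ⊆ interior t ∪ (closure t)ᶜ := fun z hz => by
    by_cases hzi : z ∈ interior t
    · exact Or.inl hzi
    · exact Or.inr fun hzc => h ⟨z, hz, hzc, hzi⟩
  obtain ⟨x, hxs, hxt⟩ := hst
  obtain ⟨y, hys, hyt⟩ := hst'
  obtain ⟨z, -, hzi, hzc⟩ := hs _ _ isOpen_interior isClosed_closure.isOpen_compl hcover
    ⟨x, hxs, (hcover hxs).resolve_right fun hx => hx (subset_closure hxt)⟩
    ⟨y, hys, (hcover hys).resolve_left fun hy => hyt (interior_subset hy)⟩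
  exact hzc (interior_subset_closure hzi)

theorem exists_mem_frontier_dist_le {V : Type*} [NormedAddCommGroup V] [NormedSpace ℝ V]
    {s : Set V} {x y : V} (hx : x ∈ s) (hy : y ∉ s) :
    ∃ z ∈ frontier s, dist x z ≤ dist x y := by
  obtain ⟨z, hzseg, hz⟩ := (convex_segment x y).isPreconnected.inter_frontier_nonempty
    ⟨x, left_mem_segment ℝ x y, hx⟩ ⟨y, right_mem_segment ℝ x y, hy⟩
  exact ⟨z, hz, dist_comm x z ▸ segment_subset_closedBall_left x y hzseg⟩

theorem tendsto_measure_of_subset_cthickening {α ι : Type*} [PseudoMetricSpace α] [ProperSpace α]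
    [MeasurableSpace α] [OpensMeasurableSpace α] {μ : Measure α} [IsFiniteMeasureOnCompacts μ]
    {s : Set α} (hsb : Bornology.IsBounded s) (hsc : IsClosed s) (hs0 : μ s = 0)
    {l : Filter ι} {A : ι → Set α} {r : ι → ℝ} (hr : Tendsto r l (𝓝 0))
    (hA : ∀ n, A n ⊆ cthickening (r n) s) :
    Tendsto (fun n => μ (A n)) l (𝓝 0) := by
  have hfin : ∃ R > 0, μ (cthickening R s) ≠ ⊤ :=
    ⟨1, one_pos, hsb.cthickening.measure_lt_top.ne⟩
  have hlim := (tendsto_measure_cthickening_of_isClosed hfin hsc).comp hr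
  rw [hs0] at hlim
  exact tendsto_of_tendsto_of_tendsto_of_le_of_le tendsto_const_nhds hlim
    (fun _ => zero_le) fun n => measure_mono (hA n)

lemma dist_le_of_mem_cube {ρ : ℝ} (hρ : 0 ≤ ρ) {x c : E3} (h : x ∈ cube ρ c) :
    dist x c ≤ Real.sqrt 3 * ρ / 2 := by
  have hcoord : ∀ k, dist (x k) (c k) ^ 2 ≤ (ρ / 2) ^ 2 := fun k => by
    obtain ⟨h1, h2⟩ := h k
    rw [Real.dist_eq, sq_abs]
    nlinarith
  calc dist x c = Real.sqrt (∑ k, dist (x k) (c k) ^ 2) := EuclideanSpace.dist_eq x c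
    _ ≤ Real.sqrt (∑ _k : Fin 3, (ρ / 2) ^ 2) :=
        Real.sqrt_le_sqrt (Finset.sum_le_sum fun k _ => hcoord k)
    _ = Real.sqrt 3 * ρ / 2 := by
        rw [Finset.sum_const, Finset.card_univ, Fintype.card_fin, nsmul_eq_mul, Nat.cast_ofNat,
          Real.sqrt_mul (by norm_num), Real.sqrt_sq (by linarith)]
        ring

def roundLat (ρ : ℝ) (x : E3) : E3 := WithLp.toLp 2 (fun k => ρ * (round (x k / ρ) : ℤ))

lemma lat_roundLat (ρ : ℝ) (x : E3) : lat ρ (roundLat ρ x) := fun k => ⟨round (x k / ρ), rfl⟩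

lemma mem_cube_roundLat {ρ : ℝ} (hρ : 0 < ρ) (x : E3) : x ∈ cube ρ (roundLat ρ x) := by
  intro k
  obtain ⟨h1, h2⟩ := round_eq_iff.1 (rfl : round (x k / ρ) = _)
  have hx : x k = ρ * (x k / ρ) := (mul_div_cancel₀ _ hρ.ne').symm
  change ρ * _ - ρ / 2 ≤ x k ∧ x k < ρ * _ + ρ / 2
  constructor <;> nlinarith

section Recovery

variable {ε η : ℝ} {Ω E : Set E3}

lemma exists_frontier_near_of_mem_Qeps_of_notMem (hε : 0 ≤ ε) (hη : 0 ≤ η) {x : E3}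
    (hx : x ∈ Qeps ε (Eeps ε η Ω E)) (hxE : x ∉ E) :
    ∃ z ∈ frontier E, dist x z ≤ Real.sqrt 3 * (η + ε) / 2 := by
  simp only [Qeps, mem_iUnion] at hx
  obtain ⟨j, ⟨-, -, i, -, hiE, hji⟩, hxj⟩ := hx
  obtain ⟨z, hz, hxz⟩ := exists_mem_frontier_dist_le (s := Eᶜ) hxE (not_not.2 hiE)
  refine ⟨z, frontier_compl E ▸ hz, ?_⟩
  linarith [dist_triangle x j i, dist_le_of_mem_cube hε hxj, dist_le_of_mem_cube hη hji]

lemma exists_frontier_near_of_mem_of_notMem_Qeps (hε : 0 < ε) (hη : 0 < η) (hεη : ε ≤ 2 * η)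
    (hEcl : closure E ⊆ Ω) (hdist : ∀ x ∈ E, ∀ y ∈ frontier Ω, Real.sqrt 3 * η < dist x y)
    {x : E3} (hxE : x ∈ E) (hx : x ∉ Qeps ε (Eeps ε η Ω E) ∩ Ω) :
    ∃ z ∈ frontier E, dist x z ≤ Real.sqrt 3 * (η + ε) / 2 := by
  have hxΩ : x ∈ Ω := hEcl (subset_closure hxE)
  set j := roundLat ε x
  have hxj : x ∈ cube ε j := mem_cube_roundLat hε x
  have hdxj := dist_le_of_mem_cube hε.le hxj
  have hjΩ : j ∈ Ω := by
    by_contra hjΩ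
    obtain ⟨z, hz, hxz⟩ := exists_mem_frontier_dist_le hxΩ hjΩ
    nlinarith [hdist x hxE z hz, Real.sqrt_nonneg 3]
  set i := roundLat η j
  have hji : j ∈ cube η i := mem_cube_roundLat hη j
  have hiE : i ∉ E := fun hiE => hx ⟨mem_biUnion ⟨lat_roundLat ε x, hjΩ,
    i, lat_roundLat η j, hiE, hji⟩ hxj, hxΩ⟩
  obtain ⟨z, hz, hxz⟩ := exists_mem_frontier_dist_le hxE hiE
  refine ⟨z, hz, ?_⟩
  linarith [dist_triangle x j i, dist_le_of_mem_cube hη.le hji]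

lemma exists_frontier_near_of_mem_symmDiff (hε : 0 < ε) (hη : 0 < η) (hεη : ε ≤ 2 * η)
    (hEcl : closure E ⊆ Ω) (hdist : ∀ x ∈ E, ∀ y ∈ frontier Ω, Real.sqrt 3 * η < dist x y) :
    ∀ x ∈ symmDiff (Qeps ε (Eeps ε η Ω E) ∩ Ω) E,
      ∃ z ∈ frontier E, dist x z ≤ Real.sqrt 3 * (η + ε) / 2 := by
  intro x hx
  rcases mem_symmDiff.1 hx with ⟨⟨hxQ, -⟩, hxE⟩ | ⟨hxE, hxQ⟩
  · exact exists_frontier_near_of_mem_Qeps_of_notMem hε.le hη.le hxQ hxE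
  · exact exists_frontier_near_of_mem_of_notMem_Qeps hε hη hεη hEcl hdist hxE hxQ

end Recovery

theorem statement14_general
    (Ω : Set E3) (hΩb : Bornology.IsBounded Ω)
    (E : Set E3) (hEcl : closure E ⊆ Ω)
    (ε η : ℕ → ℝ) (hε : ∀ n, 0 < ε n) (hη : ∀ n, 0 < η n)
    (hratio : ∀ n, ∃ m : ℕ, η n = (m : ℝ) * ε n)
    (hdist : ∀ n, ∀ x ∈ E, ∀ y ∈ frontier Ω, Real.sqrt 3 * η n < dist x y) :
    (∀ n, symmDiff (Qeps (ε n) (Eeps (ε n) (η n) Ω E) ∩ Ω) E ⊆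
        {x : E3 | Metric.infDist x (frontier E) ≤ Real.sqrt 3 * (η n + ε n) / 2}) ∧
      (volume (frontier E) = 0 → Tendsto η atTop (𝓝 0) →
        Tendsto (fun n => volume (symmDiff (Qeps (ε n) (Eeps (ε n) (η n) Ω E) ∩ Ω) E))
          atTop (𝓝 0)) := by
  have hεη : ∀ n, ε n ≤ η n := fun n =>
    let ⟨_, hm⟩ := hratio n
    le_of_eq_natCast_mul (hε n).le (hη n) hm
  have hnear n := exists_frontier_near_of_mem_symmDiff (hε n) (hη n)
    (by linarith [hεη n, hη n]) hEcl (hdist n)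
  refine ⟨fun n x hx => ?_, fun hvol hη0 => ?_⟩
  · obtain ⟨z, hz, hxz⟩ := hnear n x hx
    exact (infDist_le_dist_of_mem hz).trans hxz
  · refine tendsto_measure_of_subset_cthickening (hΩb.subset (frontier_subset_closure.trans hEcl))
      isClosed_frontier hvol (r := fun n => Real.sqrt 3 * (η n + ε n) / 2) ?_ fun n x hx => ?_
    · refine squeeze_zero (fun n => by have := hε n; have := hη n; positivity)
        (fun n => ?_) (by simpa using hη0.const_mul (Real.sqrt 3))
      nlinarith [hεη n, Real.sqrt_nonneg 3]
    · obtain ⟨z, hz, hxz⟩ := hnear n x hx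
      exact mem_cthickening_of_dist_le x z _ _ hz hxz

/-- For `E` compactly contained in the bounded open set `Ω`, the
symmetric difference of `Q_ε(E_ε) ∩ Ω` and `E` is contained in the
`√3(η_ε+ε)/2`-neighbourhood of `∂E`; in particular, if `L³(∂E) = 0` and `η_ε → 0`, the
indicator functions of `Q_ε(E_ε) ∩ Ω` converge to `χ_E` in `L¹(Ω)`. -/
theorem statement14
    (Ω : Set E3) (hΩo : IsOpen Ω) (hΩb : Bornology.IsBounded Ω)
    (E : Set E3) (hEm : MeasurableSet E) (hEcl : closure E ⊆ Ω)
    (ε η : ℕ → ℝ) (hε : ∀ n, 0 < ε n) (hη : ∀ n, 0 < η n)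
    (hratio : ∀ n, ∃ m : ℕ, η n = (m : ℝ) * ε n)
    (hdist : ∀ n, ∀ x ∈ E, ∀ y ∈ frontier Ω, Real.sqrt 3 * η n < dist x y) :
    (∀ n, symmDiff (Qeps (ε n) (Eeps (ε n) (η n) Ω E) ∩ Ω) E ⊆
        {x : E3 | Metric.infDist x (frontier E) ≤ Real.sqrt 3 * (η n + ε n) / 2}) ∧
      (volume (frontier E) = 0 → Tendsto η atTop (𝓝 0) →
        Tendsto (fun n => volume (symmDiff (Qeps (ε n) (Eeps (ε n) (η n) Ω E) ∩ Ω) E))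
          atTop (𝓝 0)) :=
  statement14_general Ω hΩb E hEcl ε η hε hη hratio hdist
end
end

section
/- Let ε, η_ε > 0 with η_ε/ε ∈ ℕ, let Ω ⊆ U be open subsets of ℝ³, and let i ∈ εℤ³ with Q_{η_ε}(i) ⊆ U. Suppose E ⊆ Z_ε(Ω) is a simple coordinate laminate in Q_{η_ε}(i) with normal ν ∈ {e₁,e₂,e₃}, and suppose ∅ ≠ E ∩ Q_{η_ε}(i) ≠ Z_ε(Q_{η_ε}(i)). Then F^per_ε(E, Q_{η_ε}(i)) ≥ c_ν·η_ε², where c_ν is the weight of the neighbor ξ = ν ∈ V. -/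
/-!
The lattice points of `Q_{nε}(i)` are `ε z` for `z` in an `n × n × n` box of integer indices.
Along the normal `e_m` the laminate profile is neither constantly true nor constantly false on
the `n` layers of that box, so some layer `w` lies in `E` while an adjacent layer `w ± 1` does
not. Each of the `n²` sites of layer `w` then has a broken bond in direction `±e_m`, costing
`ε² c_{±e_m} = ε² c_{e_m}`, which adds up to `n² ε² c_{e_m} = c_{e_m} η²`.
-/

open Set Filter MeasureTheory Metric
open scoped BigOperators ENNReal Topology

noncomputable section

attribute [local instance] Classical.propDecidable

theorem Int.exists_mem_Ico_and_not_succ {H : ℤ → Prop} {a b : ℤ} (hab : a ≤ b) (ha : H a)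
    (hb : ¬H b) : ∃ w ∈ Set.Ico a b, H w ∧ ¬H (w + 1) := by
  induction b, hab using Int.leInduction with
  | base => exact absurd ha hb
  | succ b hab ih =>
    by_cases hHb : H b
    · exact ⟨b, ⟨hab, by omega⟩, hHb, hb⟩
    · obtain ⟨w, ⟨haw, hwb⟩, hw⟩ := ih hHb
      exact ⟨w, ⟨haw, by omega⟩, hw⟩

theorem Int.exists_adjacent_change {H : ℤ → Prop} {a b : ℤ} (ha : H a) (hb : ¬H b) :
    ∃ w σ : ℤ, (σ = 1 ∨ σ = -1) ∧ w ∈ Set.uIcc a b ∧ w + σ ∈ Set.uIcc a b ∧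
      H w ∧ ¬H (w + σ) := by
  rcases le_total a b with hab | hba
  · obtain ⟨w, ⟨haw, hwb⟩, hw⟩ := Int.exists_mem_Ico_and_not_succ hab ha hb
    refine ⟨w, 1, Or.inl rfl, ?_, ?_, hw⟩ <;> rw [Set.uIcc_of_le hab] <;> constructor <;> omega
  · obtain ⟨w, ⟨hbw, hwa⟩, hw, hw'⟩ :=
      Int.exists_mem_Ico_and_not_succ (H := fun z => ¬H z) hba hb (not_not.2 ha)
    refine ⟨w + 1, -1, Or.inr rfl, ?_, ?_, not_not.1 hw', by simpa using hw⟩ <;>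
      rw [Set.uIcc_of_ge hba] <;> constructor <;> omega

section LatticeBox

variable {ι : Type*} [Fintype ι] [DecidableEq ι]

def latticeBox (s : ι → ℤ) (n : ℕ) : Finset (ι → ℤ) :=
  Fintype.piFinset fun k => Finset.Ico (s k) (s k + n)

def latticeLayer (s : ι → ℤ) (n : ℕ) (m : ι) (w : ℤ) : Finset (ι → ℤ) :=
  Fintype.piFinset (Function.update (fun k => Finset.Ico (s k) (s k + n)) m {w})

variable {s z : ι → ℤ} {n : ℕ} {m : ι} {w : ℤ}

theorem mem_latticeBox : z ∈ latticeBox s n ↔ ∀ k, z k ∈ Set.Ico (s k) (s k + n) := by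
  simp [latticeBox]

theorem mem_latticeLayer :
    z ∈ latticeLayer s n m w ↔ z m = w ∧ ∀ k ≠ m, z k ∈ Set.Ico (s k) (s k + n) := by
  simp only [latticeLayer, Fintype.mem_piFinset, Function.update_apply]
  constructor
  · intro hz
    exact ⟨by simpa using hz m, fun k hk => by simpa [hk] using hz k⟩
  · rintro ⟨hzm, hz⟩ k
    split_ifs with hk
    · simp [hk, hzm]
    · simpa using hz k hk

theorem card_latticeLayer : (latticeLayer s n m w).card = n ^ (Fintype.card ι - 1) := by
  rw [latticeLayer, Fintype.card_piFinset, Fintype.prod_eq_mul_prod_compl m]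
  rw [Finset.prod_congr rfl fun k hk => by
    rw [Function.update_of_ne (Finset.mem_compl.1 hk ∘ Finset.mem_singleton.2)]]
  simp [Finset.card_compl]

theorem latticeLayer_subset_latticeBox (hw : w ∈ Set.Ico (s m) (s m + n)) :
    latticeLayer s n m w ⊆ latticeBox s n := by
  intro z hz
  rw [mem_latticeLayer] at hz
  refine mem_latticeBox.2 fun k => ?_
  by_cases hk : k = m
  · exact hk ▸ hz.1 ▸ hw
  · exact hz.2 k hk

theorem add_single_mem_latticeLayer (hz : z ∈ latticeLayer s n m w) (σ : ℤ) :
    z + Pi.single m σ ∈ latticeLayer s n m (w + σ) := by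
  rw [mem_latticeLayer] at hz ⊢
  refine ⟨by simp [hz.1], fun k hk => ?_⟩
  simpa [Pi.single_apply, hk] using hz.2 k hk

end LatticeBox

section Lattice

variable {ε : ℝ}

@[simp]
theorem toE3_apply (z : Fin 3 → ℤ) (k : Fin 3) : toE3 z k = z k := rfl

theorem toE3_add (z z' : Fin 3 → ℤ) : toE3 (z + z') = toE3 z + toE3 z' := by
  ext k; simp

theorem smul_toE3_injective (hε : ε ≠ 0) : Function.Injective fun z : Fin 3 → ℤ => ε • toE3 z := by
  intro z z' h
  funext k
  simpa [hε] using congrArg (· k) h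

theorem lat_iff_exists_smul_toE3 {x : E3} : lat ε x ↔ ∃ z, ε • toE3 z = x := by
  constructor
  · intro hx
    choose z hz using hx
    exact ⟨z, by ext k; simp [hz]⟩
  · rintro ⟨z, rfl⟩ k
    exact ⟨z k, by simp⟩

theorem le_mul_and_mul_lt_iff_mem_Ico (hε : 0 < ε) (a : ℝ) (n : ℕ) (z : ℤ) :
    (a ≤ ε * z ∧ ε * z < a + n * ε) ↔ z ∈ Set.Ico ⌈a / ε⌉ (⌈a / ε⌉ + n) := by
  have hlt : z - n < ⌈a / ε⌉ ↔ ε * z < a + n * ε := by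
    rw [Int.lt_ceil, lt_div_iff₀ hε]; push_cast; constructor <;> intro h <;> linarith
  rw [Set.mem_Ico, Int.ceil_le, div_le_iff₀ hε, mul_comm (z : ℝ) ε, ← hlt]
  constructor <;> rintro ⟨h₁, h₂⟩ <;> exact ⟨h₁, by omega⟩

def cubeCorner (ε ρ : ℝ) (x : E3) : Fin 3 → ℤ := fun k => ⌈(x k - ρ / 2) / ε⌉

theorem smul_toE3_mem_cube_iff (hε : 0 < ε) (n : ℕ) (x : E3) (z : Fin 3 → ℤ) :
    ε • toE3 z ∈ cube (n * ε) x ↔ z ∈ latticeBox (cubeCorner ε (n * ε) x) n := by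
  simp only [cube, mem_latticeBox, cubeCorner, ← le_mul_and_mul_lt_iff_mem_Ico hε]
  refine forall_congr' fun k => ?_
  rw [show x k + n * ε / 2 = x k - n * ε / 2 + n * ε by ring]
  simp

theorem Zset_cube_eq_image (hε : 0 < ε) (n : ℕ) (x : E3) :
    Zset ε (cube (n * ε) x) =
      (fun z => ε • toE3 z) '' ↑(latticeBox (cubeCorner ε (n * ε) x) n) := by
  ext p
  simp only [Zset, lat_iff_exists_smul_toE3, Set.mem_image, Finset.mem_coe]
  constructor
  · rintro ⟨⟨z, rfl⟩, hz⟩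
    exact ⟨z, (smul_toE3_mem_cube_iff hε n x z).1 hz, rfl⟩
  · rintro ⟨z, hz, rfl⟩
    exact ⟨⟨z, rfl⟩, (smul_toE3_mem_cube_iff hε n x z).2 hz⟩

end Lattice

def siteEnergy (ε : ℝ) (V : Finset (Fin 3 → ℤ)) (c : (Fin 3 → ℤ) → ℝ) (U E : Set E3)
    (p : E3) : ℝ :=
  ∑ ξ ∈ V, if p + ε • toE3 ξ ∈ Zset ε U ∧ p + ε • toE3 ξ ∉ E then ε ^ 2 * c ξ else 0

section Perimeter

variable {ε : ℝ} {V : Finset (Fin 3 → ℤ)} {c : (Fin 3 → ℤ) → ℝ} {U E : Set E3}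

theorem siteEnergy_nonneg (hc : ∀ ξ ∈ V, 0 ≤ c ξ) (p : E3) : 0 ≤ siteEnergy ε V c U E p :=
  Finset.sum_nonneg fun ξ hξ => by
    have := hc ξ hξ
    split_ifs <;> positivity

theorem le_siteEnergy (hc : ∀ ξ ∈ V, 0 ≤ c ξ) {ξ : Fin 3 → ℤ} (hξ : ξ ∈ V) {p : E3}
    (hU : p + ε • toE3 ξ ∈ Zset ε U) (hE : p + ε • toE3 ξ ∉ E) :
    ε ^ 2 * c ξ ≤ siteEnergy ε V c U E p := by
  have hterm := Finset.single_le_sum (f := fun ξ =>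
      if p + ε • toE3 ξ ∈ Zset ε U ∧ p + ε • toE3 ξ ∉ E then ε ^ 2 * c ξ else 0)
    (fun ξ hξ => by have := hc ξ hξ; split_ifs <;> positivity) hξ
  simpa [siteEnergy, hU, hE] using hterm

theorem sum_siteEnergy_le_Fper (hc : ∀ ξ ∈ V, 0 ≤ c ξ) {A : Set E3}
    (hfin : (Zset ε A ∩ E).Finite) {T : Finset E3} (hT : ↑T ⊆ Zset ε A ∩ E) :
    ∑ p ∈ T, siteEnergy ε V c U E p ≤ Fper ε V c U E A := by
  rw [← Finset.sum_subtype_of_mem _ hT]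
  exact (hfin.summable (siteEnergy ε V c U E)).sum_le_tsum _
    fun p _ => siteEnergy_nonneg hc p

theorem card_mul_le_Fper (hc : ∀ ξ ∈ V, 0 ≤ c ξ) {A : Set E3}
    (hfin : (Zset ε A ∩ E).Finite) {T : Finset E3} (hT : ↑T ⊆ Zset ε A ∩ E)
    {ξ : Fin 3 → ℤ} (hξ : ξ ∈ V)
    (hbond : ∀ p ∈ T, p + ε • toE3 ξ ∈ Zset ε U ∧ p + ε • toE3 ξ ∉ E) :
    T.card * (ε ^ 2 * c ξ) ≤ Fper ε V c U E A :=
  calc T.card * (ε ^ 2 * c ξ) = ∑ _p ∈ T, ε ^ 2 * c ξ := by simp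
    _ ≤ ∑ p ∈ T, siteEnergy ε V c U E p :=
      Finset.sum_le_sum fun p hp => le_siteEnergy hc hξ (hbond p hp).1 (hbond p hp).2
    _ ≤ Fper ε V c U E A := sum_siteEnergy_le_Fper hc hfin hT

end Perimeter

theorem LaminateWith.exists_profile {ε : ℝ} {U A E : Set E3} {m : Fin 3}
    (hlam : LaminateWith ε U A E m) (hAU : A ⊆ U) :
    ∃ h : ℝ → Prop, ∀ p ∈ Zset ε A, p ∈ E ↔ h (p m) := by
  obtain ⟨h, hh⟩ := hlam
  refine ⟨h, fun p hp => ?_⟩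
  simpa [Set.mem_inter_iff, hp] using hh p ⟨hp.1, hAU hp.2⟩

theorem unitZ_eq_single (m : Fin 3) : unitZ m = Pi.single m 1 := by
  funext j
  simp [unitZ, Pi.single_apply]

theorem sq_mul_le_Fper_of_interface {ε : ℝ} (hε : 0 < ε) {V : Finset (Fin 3 → ℤ)}
    {c : (Fin 3 → ℤ) → ℝ} (hc : ∀ ξ ∈ V, 0 ≤ c ξ) {U E : Set E3} {n : ℕ} {x : E3}
    (hQU : cube (n * ε) x ⊆ U) {m : Fin 3} {H : ℤ → Prop}
    (hprofile : ∀ z ∈ latticeBox (cubeCorner ε (n * ε) x) n, ε • toE3 z ∈ E ↔ H (z m))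
    {w σ : ℤ} (hw : w ∈ Set.Ico (cubeCorner ε (n * ε) x m) (cubeCorner ε (n * ε) x m + n))
    (hwσ : w + σ ∈ Set.Ico (cubeCorner ε (n * ε) x m) (cubeCorner ε (n * ε) x m + n))
    (hHw : H w) (hHwσ : ¬H (w + σ)) (hξ : Pi.single m σ ∈ V) :
    n ^ 2 * (ε ^ 2 * c (Pi.single m σ)) ≤ Fper ε V c U E (cube (n * ε) x) := by
  set s := cubeCorner ε (n * ε) x
  have hZ := Zset_cube_eq_image hε n x
  have hfin : (Zset ε (cube (n * ε) x) ∩ E).Finite :=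
    (hZ ▸ (latticeBox s n).finite_toSet.image _).subset Set.inter_subset_left
  have hbox {z w'} (hz : z ∈ latticeLayer s n m w') (hw' : w' ∈ Set.Ico (s m) (s m + n)) :
      z ∈ latticeBox s n ∧ ε • toE3 z ∈ Zset ε (cube (n * ε) x) := by
    have hzbox := latticeLayer_subset_latticeBox hw' hz
    exact ⟨hzbox, hZ ▸ Set.mem_image_of_mem _ hzbox⟩
  set T := (latticeLayer s n m w).image fun z => ε • toE3 z
  have hcard : T.card = n ^ 2 := by
    rw [Finset.card_image_of_injective _ (smul_toE3_injective hε.ne'), card_latticeLayer]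
    rfl
  have hT : ↑T ⊆ Zset ε (cube (n * ε) x) ∩ E := by
    rw [Finset.coe_image]
    rintro _ ⟨z, hz, rfl⟩
    obtain ⟨hzbox, hzZ⟩ := hbox hz hw
    exact ⟨hzZ, (hprofile z hzbox).2 ((mem_latticeLayer.1 hz).1 ▸ hHw)⟩
  have hbond : ∀ p ∈ T, p + ε • toE3 (Pi.single m σ) ∈ Zset ε U ∧
      p + ε • toE3 (Pi.single m σ) ∉ E := by
    simp only [T, Finset.mem_image]
    rintro _ ⟨z, hz, rfl⟩
    have hz' := add_single_mem_latticeLayer hz σ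
    obtain ⟨hzbox, hzZ⟩ := hbox hz' hwσ
    rw [← smul_add, ← toE3_add]
    exact ⟨⟨hzZ.1, hQU hzZ.2⟩, fun hzE => hHwσ ((mem_latticeLayer.1 hz').1 ▸
      (hprofile _ hzbox).1 hzE)⟩
  simpa [hcard] using card_mul_le_Fper hc hfin hT hξ hbond

theorem exists_smul_toE3_mem_and_not_mem {ε : ℝ} {A E : Set E3} {B : Set (Fin 3 → ℤ)}
    (hZ : Zset ε A = (fun z => ε • toE3 z) '' B) (hE : ∀ p ∈ E, lat ε p)
    (hne : (E ∩ A).Nonempty) (hproper : E ∩ A ≠ Zset ε A) :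
    (∃ z ∈ B, ε • toE3 z ∈ E) ∧ ∃ z ∈ B, ε • toE3 z ∉ E := by
  constructor
  · obtain ⟨p, hpE, hp⟩ := hne
    have hpZ : p ∈ Zset ε A := ⟨hE p hpE, hp⟩
    rw [hZ] at hpZ
    obtain ⟨z, hz, rfl⟩ := hpZ
    exact ⟨z, hz, hpE⟩
  · obtain ⟨p, hp, hpE⟩ : ∃ p ∈ Zset ε A, p ∉ E := by
      by_contra! hc
      exact hproper (subset_antisymm (fun p hp => ⟨hE p hp.1, hp.2⟩) fun p hp => ⟨hc p hp, hp.2⟩)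
    rw [hZ] at hp
    obtain ⟨z, hz, rfl⟩ := hp
    exact ⟨z, hz, hpE⟩

theorem statement16_general (ε ηm : ℝ) (hε : 0 < ε)
    (hratio : ∃ n : ℕ, ηm = (n : ℝ) * ε)
    (Ω U : Set E3)
    (V : Finset (Fin 3 → ℤ)) (c : (Fin 3 → ℤ) → ℝ)
    (hVe : ∀ m : Fin 3, unitZ m ∈ V ∧ -unitZ m ∈ V)
    (hcpos : ∀ ξ ∈ V, 0 < c ξ) (hcsymm : ∀ ξ ∈ V, c (-ξ) = c ξ)
    (i : E3) (hQU : cube ηm i ⊆ U)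
    (E : Set E3) (hE : E ⊆ Zset ε Ω)
    (m : Fin 3) (hlam : LaminateWith ε U (cube ηm i) E m)
    (hne : (E ∩ cube ηm i).Nonempty)
    (hproper : E ∩ cube ηm i ≠ Zset ε (cube ηm i)) :
    c (unitZ m) * ηm ^ 2 ≤ Fper ε V c U E (cube ηm i) := by
  obtain ⟨n, rfl⟩ := hratio
  have hZ := Zset_cube_eq_image hε n i
  obtain ⟨h, hh⟩ := hlam.exists_profile hQU
  have hprofile : ∀ z ∈ latticeBox (cubeCorner ε (n * ε) i) n,
      ε • toE3 z ∈ E ↔ h (ε * z m) := fun z hz => hh _ (hZ ▸ Set.mem_image_of_mem _ hz)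
  obtain ⟨⟨z0, hz0, hz0E⟩, ⟨z1, hz1, hz1E⟩⟩ :=
    exists_smul_toE3_mem_and_not_mem hZ (fun p hp => (hE hp).1) hne hproper
  obtain ⟨w, σ, hσ, hw, hwσ, hHw, hHwσ⟩ := Int.exists_adjacent_change
    (H := fun z : ℤ => h (ε * z)) ((hprofile z0 hz0).1 hz0E) (mt (hprofile z1 hz1).2 hz1E)
  have hcol := Set.ordConnected_Ico.uIcc_subset (mem_latticeBox.1 hz0 m) (mem_latticeBox.1 hz1 m)
  obtain ⟨hξV, hξc⟩ : Pi.single m σ ∈ V ∧ c (Pi.single m σ) = c (unitZ m) := by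
    rcases hσ with rfl | rfl
    · exact ⟨unitZ_eq_single m ▸ (hVe m).1, by rw [unitZ_eq_single]⟩
    · rw [Pi.single_neg, ← unitZ_eq_single]
      exact ⟨(hVe m).2, hcsymm _ (hVe m).1⟩
  calc c (unitZ m) * (n * ε) ^ 2 = n ^ 2 * (ε ^ 2 * c (Pi.single m σ)) := by rw [hξc]; ring
    _ ≤ _ := sq_mul_le_Fper_of_interface (H := fun z : ℤ => h (ε * z)) hε
      (fun ξ hξ => (hcpos ξ hξ).le) hQU hprofile (hcol hw) (hcol hwσ) hHw hHwσ hξV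

/-- If `E` is a simple coordinate laminate in `Q_{η_ε}(i) ⊆ U` with
normal `ν = e_m`, which is neither empty nor all of `Z_ε(Q_{η_ε}(i))` there, then
`F^per_ε(E, Q_{η_ε}(i)) ≥ c_ν·η_ε²`. -/
theorem statement16 (ε ηm : ℝ) (hε : 0 < ε) (hηm : 0 < ηm)
    (hratio : ∃ n : ℕ, ηm = (n : ℝ) * ε)
    (Ω U : Set E3) (hΩ : IsOpen Ω) (hU : IsOpen U) (hΩU : Ω ⊆ U)
    (V : Finset (Fin 3 → ℤ)) (c : (Fin 3 → ℤ) → ℝ)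
    (hV0 : ∀ ξ ∈ V, ξ ≠ 0) (hV1 : ∀ ξ ∈ V, ∀ j, |ξ j| ≤ 1)
    (hVe : ∀ m : Fin 3, unitZ m ∈ V ∧ -unitZ m ∈ V)
    (hVsymm : ∀ ξ ∈ V, -ξ ∈ V)
    (hcpos : ∀ ξ ∈ V, 0 < c ξ) (hcsymm : ∀ ξ ∈ V, c (-ξ) = c ξ)
    (i : E3) (hi : lat ε i) (hQU : cube ηm i ⊆ U)
    (E : Set E3) (hE : E ⊆ Zset ε Ω)
    (m : Fin 3) (hlam : LaminateWith ε U (cube ηm i) E m)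
    (hne : (E ∩ cube ηm i).Nonempty)
    (hproper : E ∩ cube ηm i ≠ Zset ε (cube ηm i)) :
    c (unitZ m) * ηm ^ 2 ≤ Fper ε V c U E (cube ηm i) :=
  statement16_general ε ηm hε hratio Ω U V c hVe hcpos hcsymm i hQU E hE m hlam hne hproper
end
end
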